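/- Let x be a cardinal point and y a coast point of PG(2,q) such that W(x) ∪ W(y) contains all coast points of PG(2,q). Then for some permutation {i,j,k} = {1,2,3}, x = cᵢ and y lies on the line ⟨c_j, c_k⟩. -/
import Mathlib

open Projectivization Classical

variable (F : Type*) [Field F] [Fintype F] [DecidableEq F]

noncomputable def cardPt (i : Fin 3) : Projectivization F (Fin 3 → F) :=
  Projectivization.mk F (Pi.single i 1) (by intro h; simpa using congrFun h i)

noncomputable def pline (u v : Projectivization F (Fin 3 → F)) :
    Set (Projectivization F (Fin 3 → F)) :=
  if u = v then {u}
  else {p | p.submodule ≤ u.submodule ⊔ v.submodule}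

noncomputable def windRose (p : Projectivization F (Fin 3 → F)) :
    Set (Projectivization F (Fin 3 → F)) :=
  pline F p (cardPt F 0) ∪ pline F p (cardPt F 1) ∪ pline F p (cardPt F 2)

noncomputable def nnz (p : Projectivization F (Fin 3 → F)) : ℕ :=
  (Finset.univ.filter fun i : Fin 3 => p.rep i ≠ 0).card

def IsCardinal (p : Projectivization F (Fin 3 → F)) : Prop := nnz F p = 1
def IsCoast (p : Projectivization F (Fin 3 → F)) : Prop := nnz F p = 2
def IsMidland (p : Projectivization F (Fin 3 → F)) : Prop := nnz F p = 3

def extBall (v : Fin 3 → F) : Set (Fin 3 → F) :=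
  {w | ∃ u ∈ Submodule.span F ({v} : Set (Fin 3 → F)), hammingDist w u ≤ 1}

-- auxiliary lemmas

lemma nnz_mk (v : Fin 3 → F) (hv : v ≠ 0) :
    nnz F (Projectivization.mk F v hv) =
      (Finset.univ.filter fun i : Fin 3 => v i ≠ 0).card := by
  obtain ⟨a, ha⟩ := Projectivization.exists_smul_eq_mk_rep F v hv
  unfold nnz
  congr 1
  apply Finset.filter_congr
  intro t _
  rw [← ha]
  simp [Units.smul_def, Units.mul_right_eq_zero]

lemma cardPt_ne (i j : Fin 3) (h : i ≠ j) : cardPt F i ≠ cardPt F j := by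
  intro h'
  rw [cardPt, cardPt, Projectivization.mk_eq_mk_iff'] at h'
  obtain ⟨a, ha⟩ := h'
  have := congrFun ha i
  simp [Pi.single_apply, h] at this

lemma submodule_cardPt (i : Fin 3) :
    (cardPt F i).submodule = Submodule.span F {Pi.single i 1} :=
  Projectivization.submodule_mk _ _

lemma fin3_aux1 : ∀ k : Fin 3, ∃ j k' : Fin 3, k ≠ j ∧ k ≠ k' ∧ j ≠ k' ∧
    ∀ m : Fin 3, m = k ∨ m = j ∨ m = k' := by decide

lemma fin3_aux2 : ∀ i k : Fin 3, k ≠ i → ∃ j : Fin 3, i ≠ j ∧ k ≠ j ∧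
    ∀ m : Fin 3, m = i ∨ m = j ∨ m = k := by decide

lemma fin3_aux3 : ∀ i m : Fin 3, ∃ t : Fin 3, t ≠ i ∧ t ≠ m := by decide

lemma nnz_cardPt (i : Fin 3) : nnz F (cardPt F i) = 1 := by
  unfold cardPt
  rw [nnz_mk F (Pi.single i 1 : Fin 3 → F)]
  have : (Finset.univ.filter fun t : Fin 3 => (Pi.single i 1 : Fin 3 → F) t ≠ 0) = {i} := by
    ext t
    by_cases h : t = i <;> simp [Pi.single_apply, h]
  rw [this, Finset.card_singleton]

lemma span_pair_eq (a b : Fin 3 → F) :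
    Submodule.span F {a} ⊔ Submodule.span F {b} = Submodule.span F {a, b} := by
  rw [show ({a, b} : Set (Fin 3 → F)) = {a} ∪ {b} by rw [Set.insert_eq], Submodule.span_union]

theorem stmt_17 (F : Type*) [Field F] [Fintype F] [DecidableEq F]
    (x y : Projectivization F (Fin 3 → F))
    (hx : IsCardinal F x) (hy : IsCoast F y)
    (hcover : {p : Projectivization F (Fin 3 → F) | IsCoast F p} ⊆
      windRose F x ∪ windRose F y) :
    ∃ i j k : Fin 3, i ≠ j ∧ i ≠ k ∧ j ≠ k ∧
      x = cardPt F i ∧ y ∈ pline F (cardPt F j) (cardPt F k) := by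
  classical
  -- x is a cardinal point: unique nonzero index i
  obtain ⟨i, hi⟩ := Finset.card_eq_one.mp hx
  have hxi : x.rep i ≠ 0 := by
    have : i ∈ Finset.univ.filter fun t : Fin 3 => x.rep t ≠ 0 := by
      rw [hi]; exact Finset.mem_singleton_self i
    simpa using this
  have hxz : ∀ t, t ≠ i → x.rep t = 0 := by
    intro t ht
    by_contra h
    have : t ∈ Finset.univ.filter fun t : Fin 3 => x.rep t ≠ 0 := by simpa using h
    rw [hi, Finset.mem_singleton] at this
    exact ht this
  have hxcard : x = cardPt F i := by
    rw [← x.mk_rep, cardPt, Projectivization.mk_eq_mk_iff']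
    refine ⟨x.rep i, funext fun t => ?_⟩
    by_cases ht : t = i
    · subst ht; simp
    · simp [Pi.single_apply, ht, hxz t ht]
  -- y is a coast point: unique zero index k
  have hy2 : (Finset.univ.filter fun t : Fin 3 => ¬ y.rep t ≠ 0).card = 1 := by
    have h1 := Finset.card_filter_add_card_filter_not
      (s := (Finset.univ : Finset (Fin 3))) (p := fun t => y.rep t ≠ 0)
    have h2 : (Finset.univ.filter fun t : Fin 3 => y.rep t ≠ 0).card = 2 := hy
    have h3 : (Finset.univ : Finset (Fin 3)).card = 3 := rfl
    omega
  obtain ⟨k, hk⟩ := Finset.card_eq_one.mp hy2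
  have hyk : y.rep k = 0 := by
    have : k ∈ Finset.univ.filter fun t : Fin 3 => ¬ y.rep t ≠ 0 := by
      rw [hk]; exact Finset.mem_singleton_self k
    simpa using this
  have hynz : ∀ t, t ≠ k → y.rep t ≠ 0 := by
    intro t ht h
    have : t ∈ Finset.univ.filter fun t : Fin 3 => ¬ y.rep t ≠ 0 := by simpa using h
    rw [hk, Finset.mem_singleton] at this
    exact ht this
  by_cases hki : k = i
  · -- y's zero coordinate is exactly i : done
    subst hki
    obtain ⟨j, k', hij, hik, hjk, hcov⟩ :
        ∃ j k' : Fin 3, k ≠ j ∧ k ≠ k' ∧ j ≠ k' ∧ ∀ m : Fin 3, m = k ∨ m = j ∨ m = k' :=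
      fin3_aux1 k
    refine ⟨k, j, k', hij, hik, hjk, hxcard, ?_⟩
    rw [pline, if_neg (cardPt_ne F j k' hjk)]
    rw [Set.mem_setOf_eq, Projectivization.submodule_eq, submodule_cardPt, submodule_cardPt,
      Submodule.span_singleton_le_iff_mem, span_pair_eq]
    rw [Submodule.mem_span_pair]
    refine ⟨y.rep j, y.rep k', funext fun t => ?_⟩
    rcases hcov t with ht | ht | ht <;> subst ht <;>
      simp [Pi.single_apply, hij.symm, hik.symm, hjk, hjk.symm, hyk]
  · -- y's zero coordinate k ≠ i : contradiction with coverage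
    exfalso
    obtain ⟨j, hij, hkj, hcov⟩ :
        ∃ j : Fin 3, i ≠ j ∧ k ≠ j ∧ ∀ m : Fin 3, m = i ∨ m = j ∨ m = k :=
      fin3_aux2 i k hki
    set w : Fin 3 → F := fun m => if m = i then 0 else 1 with hw_def
    have hwj : w j = 1 := by simp [hw_def, hij.symm]
    have hwk : w k = 1 := by simp [hw_def, hki]
    have hwi : w i = 0 := by simp [hw_def]
    have hw : w ≠ 0 := by
      intro h
      have := congrFun h j
      rw [hwj] at this
      exact one_ne_zero this
    set p : Projectivization F (Fin 3 → F) := Projectivization.mk F w hw with hp_def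
    have hpcoast : IsCoast F p := by
      rw [hp_def, IsCoast, nnz_mk]
      have : (Finset.univ.filter fun t : Fin 3 => w t ≠ 0) =
          (Finset.univ.filter fun t : Fin 3 => t ≠ i) := by
        apply Finset.filter_congr
        intro t _
        by_cases ht : t = i <;> simp [hw_def, ht]
      rw [this, Finset.filter_ne' Finset.univ i, Finset.card_erase_of_mem (Finset.mem_univ i)]
      rfl
    have hpsub : p.submodule = Submodule.span F {w} := Projectivization.submodule_mk _ _
    -- p is not on any line of the wind rose of x
    have hpx : ∀ m : Fin 3, p ∉ pline F x (cardPt F m) := by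
      intro m hm
      by_cases hmi : m = i
      · subst hmi
        rw [pline, if_pos hxcard, Set.mem_singleton_iff, hxcard] at hm
        rw [hp_def, cardPt, Projectivization.mk_eq_mk_iff'] at hm
        obtain ⟨a, ha⟩ := hm
        have := congrFun ha j
        rw [hwj] at this
        simp [Pi.single_apply, hij] at this
      · rw [pline, if_neg (by rw [hxcard]; exact cardPt_ne F i m (Ne.symm hmi))] at hm
        rw [Set.mem_setOf_eq, hpsub, hxcard, submodule_cardPt, submodule_cardPt,
          Submodule.span_singleton_le_iff_mem, span_pair_eq, Submodule.mem_span_pair] at hm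
        obtain ⟨a, b, hab⟩ := hm
        obtain ⟨t, hti, htm⟩ : ∃ t : Fin 3, t ≠ i ∧ t ≠ m := fin3_aux3 i m
        have := congrFun hab t
        simp [Pi.single_apply, hti, htm, hw_def] at this
    -- p is not on any line of the wind rose of y
    have hpy : ∀ m : Fin 3, p ∉ pline F y (cardPt F m) := by
      intro m hm
      have hym : y ≠ cardPt F m := by
        intro h
        have h1 : nnz F y = 1 := by rw [h]; exact nnz_cardPt F m
        rw [hy] at h1
        omega
      rw [pline, if_neg hym, Set.mem_setOf_eq, hpsub, Projectivization.submodule_eq,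
        submodule_cardPt, Submodule.span_singleton_le_iff_mem, span_pair_eq,
        Submodule.mem_span_pair] at hm
      obtain ⟨a, b, hab⟩ := hm
      by_cases hmk : m = k
      · subst hmk
        have h1 := congrFun hab i
        have h2 := congrFun hab j
        simp [Pi.single_apply, hki, hwi, Ne.symm hij] at h1 h2
        rcases h1 with h1 | h1
        · rw [h1] at h2
          simp [Ne.symm hkj, hwj] at h2
        · exact hynz i (fun h => hki h.symm) h1
      · have h1 := congrFun hab k
        simp [Pi.single_apply, hmk, hyk, hwk] at h1
    -- contradiction
    have := hcover hpcoast
    simp only [windRose, Set.mem_union] at this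
    rcases this with ((h | h) | h) | ((h | h) | h)
    exacts [hpx 0 h, hpx 1 h, hpx 2 h, hpy 0 h, hpy 1 h, hpy 2 h]
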